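/- arXiv:1306.6035 — 3 statements merged into one kernel-verified Lean document; each statement's English description precedes it below -/
import Mathlib

section
/- Let F be the free group on generators x_1,...,x_m, y_1,...,y_N, z_1,...,z_N, u_1,u_2,..., let α be an m-tuple of words in (x,y), and let σ be a tuple of words defining an automorphism r: x ↦ x, y ↦ σ(x,y), z ↦ z, u ↦ u with inverse y ↦ s(x,y). Then the endomorphism r^□ of F defined by x ↦ x, y ↦ y, z ↦ σ(α(x,y), z), u ↦ u is an automorphism, with inverse given by x ↦ x, y ↦ y, z ↦ s(α(x,y), z), u ↦ u. -/
namespace Stmt8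

/-- Generators of `F_∞`, in blocks `x₁,…,x_m`, `y₁,…,y_N`, `z₁,…,z_N`, `u₁,u₂,…`. -/
abbrev Idx (m N : ℕ) := (Fin m ⊕ Fin N) ⊕ (Fin N ⊕ ℕ)

abbrev F (m N : ℕ) := FreeGroup (Idx m N)

def X {m N : ℕ} (i : Fin m) : F m N := FreeGroup.of (Sum.inl (Sum.inl i))
def Y {m N : ℕ} (j : Fin N) : F m N := FreeGroup.of (Sum.inl (Sum.inr j))
def Z {m N : ℕ} (j : Fin N) : F m N := FreeGroup.of (Sum.inr (Sum.inl j))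
def U {m N : ℕ} (n : ℕ) : F m N := FreeGroup.of (Sum.inr (Sum.inr n))

/-- Substitution of given tuples for the `x`- and `y`-variables in a word in `(x,y)`. -/
noncomputable def subst {m N : ℕ} (a : Fin m → F m N) (b : Fin N → F m N) :
    FreeGroup (Fin m ⊕ Fin N) →* F m N :=
  FreeGroup.lift (Sum.elim a b)

/-- The endomorphism `x ↦ x, y ↦ σ(x,y), z ↦ z, u ↦ u`. -/
noncomputable def endXY {m N : ℕ} (σ : Fin N → FreeGroup (Fin m ⊕ Fin N)) :
    F m N →* F m N :=
  FreeGroup.lift (Sum.elim (Sum.elim X (fun j => subst X Y (σ j))) (Sum.elim Z U))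

/-- The endomorphism `x ↦ x, y ↦ y, z ↦ σ(α(x,y), z), u ↦ u`. -/
noncomputable def endZ {m N : ℕ} (α : Fin m → FreeGroup (Fin m ⊕ Fin N))
    (σ : Fin N → FreeGroup (Fin m ⊕ Fin N)) : F m N →* F m N :=
  FreeGroup.lift (Sum.elim (Sum.elim X Y)
    (Sum.elim (fun j => subst (fun i => subst X Y (α i)) Z (σ j)) U))

lemma comp_subst {m N : ℕ} (f : F m N →* F m N) (a : Fin m → F m N) (b : Fin N → F m N) :
    f.comp (subst a b) = subst (f ∘ a) (f ∘ b) := by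
  apply FreeGroup.ext_hom
  rintro (i | j) <;> simp [subst]

lemma key {m N : ℕ} (σ s : Fin N → FreeGroup (Fin m ⊕ Fin N))
    (α : Fin m → FreeGroup (Fin m ⊕ Fin N))
    (h : (endXY (m := m) (N := N) σ).comp (endXY s) = MonoidHom.id (F m N)) :
    (endZ α σ).comp (endZ α s) = MonoidHom.id (F m N) := by
  set A : Fin m → F m N := fun i => subst X Y (α i) with hA
  -- the inverse identity in the (x,y) variables
  have h1 : ∀ j, subst (X (m := m) (N := N)) (fun j => subst X Y (σ j)) (s j) = Y j := by
    intro j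
    have hc : (endXY (m := m) (N := N) σ).comp (subst X Y)
        = subst X (fun j => subst X Y (σ j)) := by
      rw [comp_subst]
      congr 1 <;> funext k <;> simp [endXY, X, Y]
    have := DFunLike.congr_fun h (Y j)
    simp only [MonoidHom.comp_apply, MonoidHom.id_apply] at this
    have e1 : endXY (m := m) (N := N) s (Y j) = subst X Y (s j) := by
      simp [endXY, Y]
    rw [e1, ← MonoidHom.comp_apply, hc] at this
    exact this
  -- transport it along `x ↦ A, y ↦ z`
  set φ : F m N →* F m N :=
    FreeGroup.lift (Sum.elim (Sum.elim A Z) (Sum.elim Z U)) with hφ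
  have hφX : ∀ i, φ (X i) = A i := by intro i; simp [hφ, X]
  have hφY : ∀ j, φ (Y j) = Z j := by intro j; simp [hφ, Y]
  have hφsub : φ.comp (subst X Y) = subst A Z := by
    rw [comp_subst]; congr 1 <;> funext k <;> simp [hφX, hφY]
  have h2 : ∀ j, subst A (fun j => subst A Z (σ j)) (s j) = Z j := by
    intro j
    have := congrArg φ (h1 j)
    rw [hφY] at this
    rw [← MonoidHom.comp_apply, comp_subst] at this
    convert this using 3
    · funext i; exact (hφX i).symm
    · funext k
      simp only [Function.comp]
      rw [← MonoidHom.comp_apply, hφsub]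
  -- endZ fixes words in (x,y)
  have hfix : (endZ (m := m) (N := N) α σ).comp (subst X Y) = subst X Y := by
    rw [comp_subst]; congr 1 <;> funext k <;> simp [endZ, X, Y]
  have hfixA : ∀ i, endZ (m := m) (N := N) α σ (A i) = A i := by
    intro i
    have := DFunLike.congr_fun hfix (α i)
    simpa using this
  apply FreeGroup.ext_hom
  rintro ((i | j) | (j | n))
  · simp [endZ, X]
  · simp [endZ, Y]
  · show (endZ α σ) ((endZ α s) (Z j)) = Z j
    have e1 : endZ (m := m) (N := N) α s (Z j) = subst A Z (s j) := by
      simp [endZ, Z, hA]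
    rw [e1, ← MonoidHom.comp_apply, comp_subst]
    have eA : (endZ (m := m) (N := N) α σ) ∘ A = A := funext hfixA
    have eZ : (endZ (m := m) (N := N) α σ) ∘ Z = fun j => subst A Z (σ j) := by
      funext k; simp [endZ, Z, hA]
    rw [eA, eZ]
    exact h2 j
  · simp [endZ, U]

/-- If `r : x ↦ x, y ↦ σ(x,y), z ↦ z, u ↦ u` is an automorphism with inverse given
by `y ↦ s(x,y)`, then for any `m`-tuple `α` of words in `(x,y)`, the endomorphism
`r^□ : x ↦ x, y ↦ y, z ↦ σ(α(x,y), z), u ↦ u` is an automorphism, with inverse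
`x ↦ x, y ↦ y, z ↦ s(α(x,y), z), u ↦ u`. -/
theorem stmt_8 (m N : ℕ) (σ s : Fin N → FreeGroup (Fin m ⊕ Fin N))
    (α : Fin m → FreeGroup (Fin m ⊕ Fin N))
    (h₁ : (endXY (m := m) (N := N) σ).comp (endXY s) = MonoidHom.id (F m N))
    (h₂ : (endXY (m := m) (N := N) s).comp (endXY σ) = MonoidHom.id (F m N)) :
    (endZ α σ).comp (endZ α s) = MonoidHom.id (F m N) ∧
    (endZ α s).comp (endZ α σ) = MonoidHom.id (F m N) := by
  exact ⟨key σ s α h₁, key s σ α h₂⟩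

end Stmt8
end

section
/- Hewitt–Savage zero-one law for product probability spaces: let (Ω, μ) be a probability space and Ω^∞ the countable product with product measure. Any measurable set A ⊆ Ω^∞ invariant under all finitely supported permutations of coordinates has measure 0 or 1. -/
open MeasureTheory


open MeasureTheory Set
open scoped symmDiff ENNReal NNReal

namespace HewittSavageAux

variable {Ω : Type*} [MeasurableSpace Ω]

/-- The collection of measurable rectangles in `ℕ → Ω`. -/
def rects (Ω : Type*) [MeasurableSpace Ω] : Set (Set (ℕ → Ω)) :=
  {t | ∃ (s : Finset ℕ) (B : ℕ → Set Ω), (∀ i, MeasurableSet (B i)) ∧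
    t = {ω | ∀ i ∈ s, ω i ∈ B i}}

lemma measurableSet_rect {s : Finset ℕ} {B : ℕ → Set Ω} (hB : ∀ i, MeasurableSet (B i)) :
    MeasurableSet {ω : ℕ → Ω | ∀ i ∈ s, ω i ∈ B i} := by
  have h : {ω : ℕ → Ω | ∀ i ∈ s, ω i ∈ B i} = ⋂ i ∈ s, (fun ω : ℕ → Ω => ω i) ⁻¹' B i := by
    ext ω; simp
  rw [h]
  exact MeasurableSet.biInter s.countable_toSet fun i _ => (measurable_pi_apply i) (hB i)

lemma isPiSystem_rects : IsPiSystem (rects Ω) := by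
  classical
  rintro _ ⟨s₁, B₁, hB₁, rfl⟩ _ ⟨s₂, B₂, hB₂, rfl⟩ -
  refine ⟨s₁ ∪ s₂, fun i => (if i ∈ s₁ then B₁ i else univ) ∩ (if i ∈ s₂ then B₂ i else univ),
    fun i => MeasurableSet.inter (by split_ifs; exacts [hB₁ i, .univ])
      (by split_ifs; exacts [hB₂ i, .univ]), ?_⟩
  ext ω
  simp only [mem_inter_iff, mem_setOf_eq, Finset.mem_union, Set.mem_ite_univ_right]
  constructor
  · rintro ⟨h1, h2⟩ i _
    exact ⟨fun h => h1 i h, fun h => h2 i h⟩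
  · intro h
    exact ⟨fun i hi => (h i (Or.inl hi)).1 hi, fun i hi => (h i (Or.inr hi)).2 hi⟩

lemma generateFrom_rects :
    MeasurableSpace.generateFrom (rects Ω) = MeasurableSpace.pi := by
  refine le_antisymm (MeasurableSpace.generateFrom_le ?_) ?_
  · rintro _ ⟨s, B, hB, rfl⟩
    exact measurableSet_rect hB
  · refine iSup_le fun i => ?_
    rw [← measurable_iff_comap_le]
    intro B hB
    apply MeasurableSpace.measurableSet_generateFrom
    refine ⟨{i}, fun _ => B, fun _ => hB, ?_⟩
    ext ω; simp

variable {μ : Measure Ω} [IsProbabilityMeasure μ]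
  {ν : Measure (ℕ → Ω)} [IsProbabilityMeasure ν]

lemma map_perm
    (hν : ∀ (s : Finset ℕ) (B : ℕ → Set Ω), (∀ i, MeasurableSet (B i)) →
      ν {ω | ∀ i ∈ s, ω i ∈ B i} = ∏ i ∈ s, μ (B i)) (σ : Equiv.Perm ℕ) :
    ν.map (fun ω n => ω (σ n)) = ν := by
  have hT : Measurable (fun (ω : ℕ → Ω) n => ω (σ n)) :=
    measurable_pi_lambda _ fun n => measurable_pi_apply _
  have : IsProbabilityMeasure (ν.map (fun ω n => ω (σ n))) :=
    Measure.isProbabilityMeasure_map hT.aemeasurable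
  refine ext_of_generate_finite (rects Ω) generateFrom_rects.symm isPiSystem_rects ?_ (by simp)
  rintro _ ⟨s, B, hB, rfl⟩
  rw [Measure.map_apply hT (measurableSet_rect hB)]
  have hpre : (fun (ω : ℕ → Ω) n => ω (σ n)) ⁻¹' {ω | ∀ i ∈ s, ω i ∈ B i}
      = {ω | ∀ j ∈ s.image σ, ω j ∈ B (σ.symm j)} := by
    ext ω
    simp only [mem_preimage, mem_setOf_eq, Finset.mem_image]
    constructor
    · rintro h j ⟨i, hi, rfl⟩
      simpa using h i hi
    · intro h i hi
      simpa using h (σ i) ⟨i, hi, rfl⟩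
  rw [hpre, hν _ _ (fun j => hB _), hν _ _ hB,
    Finset.prod_image (fun i _ j _ h => σ.injective h)]
  exact Finset.prod_congr rfl fun i _ => by simp

lemma indep_eval
    (hν : ∀ (s : Finset ℕ) (B : ℕ → Set Ω), (∀ i, MeasurableSet (B i)) →
      ν {ω | ∀ i ∈ s, ω i ∈ B i} = ∏ i ∈ s, μ (B i)) :
    ProbabilityTheory.iIndepFun
      (fun i (ω : ℕ → Ω) => ω i) ν := by
  classical
  rw [ProbabilityTheory.iIndepFun_iff_measure_inter_preimage_eq_mul]
  intro S sets hsets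
  have h1 : ∀ i ∈ S, ν ((fun ω : ℕ → Ω => ω i) ⁻¹' sets i) = μ (sets i) := by
    intro i hi
    have hmeas : ∀ j, MeasurableSet (if j = i then sets i else univ) := by
      intro j; split_ifs with hj; exacts [hj ▸ hsets i hi, .univ]
    have h := hν {i} (fun j => if j = i then sets i else univ) hmeas
    have hset : {ω : ℕ → Ω | ∀ j ∈ ({i} : Finset ℕ), ω j ∈ (if j = i then sets i else univ)}
        = (fun ω : ℕ → Ω => ω i) ⁻¹' sets i := by
      ext ω; simp
    rw [hset] at h
    simpa using h
  have hset2 : (⋂ i ∈ S, (fun ω : ℕ → Ω => ω i) ⁻¹' sets i)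
      = {ω : ℕ → Ω | ∀ i ∈ S, ω i ∈ (if i ∈ S then sets i else univ)} := by
    ext ω
    simp only [mem_iInter, mem_preimage, mem_setOf_eq]
    constructor
    · intro h i hi; rw [if_pos hi]; exact h i hi
    · intro h i hi; have := h i hi; rwa [if_pos hi] at this
  have hmeas2 : ∀ i, MeasurableSet (if i ∈ S then sets i else univ) := by
    intro i; split_ifs with hi; exacts [hsets i hi, .univ]
  rw [hset2, hν _ _ hmeas2]
  exact Finset.prod_congr rfl fun i hi => by rw [if_pos hi, h1 i hi]

/-- The involution exchanging `k` and `k + n` for `k < n`. -/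
def swapAdd (n : ℕ) : ℕ → ℕ := fun k => if k < n then k + n else if k < 2 * n then k - n else k

lemma swapAdd_involutive (n : ℕ) : Function.Involutive (swapAdd n) := by
  intro k
  unfold swapAdd
  split_ifs <;> omega

end HewittSavageAux

open HewittSavageAux in
/-- Hewitt–Savage zero-one law: let `(Ω, μ)` be a probability space and `ν` the
countable product measure `μ^∞` on `Ω^∞ = ℕ → Ω` (characterized on cylinder sets).
Any measurable set `A ⊆ Ω^∞` invariant (up to null sets) under all finitely
supported permutations of the coordinates has measure `0` or `1`. -/
theorem stmt_11 (Ω : Type*) [MeasurableSpace Ω] (μ : Measure Ω) [IsProbabilityMeasure μ]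
    (ν : Measure (ℕ → Ω)) [IsProbabilityMeasure ν]
    (hν : ∀ (s : Finset ℕ) (B : ℕ → Set Ω), (∀ i, MeasurableSet (B i)) →
      ν {ω | ∀ i ∈ s, ω i ∈ B i} = ∏ i ∈ s, μ (B i))
    (A : Set (ℕ → Ω)) (hA : MeasurableSet A)
    (hinv : ∀ σ : Equiv.Perm ℕ, {n | σ n ≠ n}.Finite →
      ν (symmDiff ((fun ω : ℕ → Ω => fun n => ω (σ n)) ⁻¹' A) A) = 0) :
    ν A = 0 ∨ ν A = 1 := by
  classical
  set x := ν A with hxdef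
  -- triangle-type inequality
  have tri : ∀ U V : Set (ℕ → Ω), ν U ≤ ν V + ν (U ∆ V) := by
    intro U V
    refine le_trans (measure_mono ?_) (measure_union_le _ _)
    intro a ha
    by_cases h : a ∈ V
    · exact Or.inl h
    · exact Or.inr (Set.mem_symmDiff.2 (Or.inl ⟨ha, h⟩))
  have hdense : ν.MeasureDense (measurableCylinders fun _ : ℕ => Ω) :=
    Measure.MeasureDense.of_generateFrom_isSetAlgebra_finite ν
      ⟨empty_mem_measurableCylinders _, fun s hs => compl_mem_measurableCylinders hs,
        fun s t hs ht => union_mem_measurableCylinders hs ht⟩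
      generateFrom_measurableCylinders.symm
  have hIndep := indep_eval (μ := μ) hν
  have key : ∀ r : ℝ, 0 < r →
      x ≤ x * x + 5 * ENNReal.ofReal r ∧ x * x ≤ x + 5 * ENNReal.ofReal r := by
    intro r hr
    set e := ENNReal.ofReal r with he
    by_cases hbig : 1 ≤ e
    · have h5 : (1 : ℝ≥0∞) ≤ 5 * e := le_trans hbig (le_mul_of_one_le_left (zero_le ..) (by norm_num))
      constructor
      · exact le_trans (le_trans prob_le_one h5) le_add_self
      · exact le_trans (mul_le_of_le_one_right (zero_le ..) prob_le_one) le_self_add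
    · push_neg at hbig
      have he1 : e ≤ 1 := hbig.le
      -- approximate A by a cylinder
      obtain ⟨t, ht, hlt⟩ := hdense.approx A hA (measure_ne_top ν A) r hr
      obtain ⟨s, S, hS, rfl⟩ := (mem_measurableCylinders t).1 ht
      set n : ℕ := s.sup id + 1 with hn
      have hsn : ∀ i ∈ s, i < n := fun i hi => Nat.lt_succ_of_le (Finset.le_sup (f := id) hi)
      set σ : Equiv.Perm ℕ := (swapAdd_involutive n).toPerm with hσdef
      have hσ : ∀ k, σ k = swapAdd n k := fun _ => rfl
      have hσs : ∀ i ∈ s, σ i = i + n := by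
        intro i hi
        rw [hσ]; unfold swapAdd; rw [if_pos (hsn i hi)]
      have hfin : {k | σ k ≠ k}.Finite := by
        refine Set.Finite.subset (Set.finite_Iio (2 * n)) fun k hk => ?_
        simp only [Set.mem_setOf_eq] at hk
        rw [Set.mem_Iio]
        by_contra hge
        push_neg at hge
        apply hk
        rw [hσ]; unfold swapAdd; rw [if_neg (by omega), if_neg (by omega)]
      set T : (ℕ → Ω) → (ℕ → Ω) := fun ω k => ω (σ k) with hTdef
      have hT : Measurable T := measurable_pi_lambda _ fun k => measurable_pi_apply _
      have hmap : ν.map T = ν := map_perm hν σ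
      have hpre : ∀ {U : Set (ℕ → Ω)}, MeasurableSet U → ν (T ⁻¹' U) = ν U := by
        intro U hU
        conv_rhs => rw [← hmap]
        rw [Measure.map_apply hT hU]
      have hmB : MeasurableSet (cylinder s S) := MeasurableSet.cylinder (α := fun _ : ℕ => Ω) s hS
      have hinvA : ν ((T ⁻¹' A) ∆ A) = 0 := hinv σ hfin
      -- independence of the cylinder and its shifted copy
      set s' : Finset ℕ := s.image σ with hs'
      have hdisj : Disjoint s s' := by
        rw [Finset.disjoint_left]
        intro i hi hi'
        obtain ⟨j, hj, hji⟩ := Finset.mem_image.1 hi'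
        have := hσs j hj
        have h1 := hsn i hi
        omega
      have hXY := hIndep.indepFun_finset s s' hdisj (fun i => measurable_pi_apply i)
      set φ : ((i : s') → Ω) → ((i : s) → Ω) :=
        fun g i => g ⟨σ i, Finset.mem_image_of_mem σ i.2⟩ with hφdef
      have hφ : Measurable φ := measurable_pi_lambda _ fun i => measurable_pi_apply _
      have hXφY := hXY.comp measurable_id hφ
      have hmul : ν (cylinder s S ∩ T ⁻¹' cylinder s S)
          = ν (cylinder s S) * ν (T ⁻¹' cylinder s S) := by
        have hBeq : cylinder s S = (fun (ω : ℕ → Ω) (i : s) => ω (i : ℕ)) ⁻¹' S := rfl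
        have hCeq : T ⁻¹' cylinder s S
            = (φ ∘ fun (ω : ℕ → Ω) (i : s') => ω (i : ℕ)) ⁻¹' S := rfl
        rw [hCeq, hBeq]
        exact hXφY.measure_inter_preimage_eq_mul S S hS hS
      have hCB : ν (T ⁻¹' cylinder s S) = ν (cylinder s S) := hpre hmB
      -- the estimates
      have hAB : ν (A ∆ cylinder s S) < e := hlt
      have hAC : ν (A ∆ (T ⁻¹' cylinder s S)) ≤ e := by
        calc ν (A ∆ (T ⁻¹' cylinder s S))
            ≤ ν ((A ∆ (T ⁻¹' A)) ∪ ((T ⁻¹' A) ∆ (T ⁻¹' cylinder s S))) :=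
              measure_mono (symmDiff_triangle A (T ⁻¹' A) (T ⁻¹' cylinder s S))
          _ ≤ ν (A ∆ (T ⁻¹' A)) + ν ((T ⁻¹' A) ∆ (T ⁻¹' cylinder s S)) := measure_union_le _ _
          _ = 0 + ν (A ∆ cylinder s S) := by
              rw [symmDiff_comm, hinvA, ← Set.preimage_symmDiff, hpre (hA.symmDiff hmB)]
          _ ≤ 0 + e := add_le_add le_rfl hAB.le
          _ = e := zero_add e
      have hABC : ν (A ∆ (cylinder s S ∩ T ⁻¹' cylinder s S)) ≤ e + e := by
        have hsub : A ∆ (cylinder s S ∩ T ⁻¹' cylinder s S)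
            ⊆ (A ∆ cylinder s S) ∪ (A ∆ (T ⁻¹' cylinder s S)) := by
          intro a ha
          simp only [Set.mem_symmDiff, Set.mem_inter_iff, Set.mem_union] at *
          tauto
        calc ν (A ∆ (cylinder s S ∩ T ⁻¹' cylinder s S))
            ≤ ν ((A ∆ cylinder s S) ∪ (A ∆ (T ⁻¹' cylinder s S))) := measure_mono hsub
          _ ≤ ν (A ∆ cylinder s S) + ν (A ∆ (T ⁻¹' cylinder s S)) := measure_union_le _ _
          _ ≤ e + e := add_le_add hAB.le hAC
      set b := ν (cylinder s S) with hb
      have hbx : b ≤ x + e := by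
        calc b ≤ x + ν (cylinder s S ∆ A) := tri _ _
          _ = x + ν (A ∆ cylinder s S) := by rw [symmDiff_comm]
          _ ≤ x + e := add_le_add le_rfl hAB.le
      have hxb : x ≤ b + e := le_trans (tri A (cylinder s S)) (add_le_add le_rfl hAB.le)
      have hb1 : b ≤ 1 := prob_le_one
      have hx1 : x ≤ 1 := prob_le_one
      constructor
      · calc x ≤ ν (cylinder s S ∩ T ⁻¹' cylinder s S)
              + ν (A ∆ (cylinder s S ∩ T ⁻¹' cylinder s S)) := by
              have := tri A (cylinder s S ∩ T ⁻¹' cylinder s S)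
              exact this
          _ ≤ b * b + (e + e) := by rw [hmul, hCB]; exact add_le_add le_rfl hABC
          _ ≤ (x + e) * (x + e) + (e + e) := add_le_add (mul_le_mul' hbx hbx) le_rfl
          _ = x * x + (x * e + (e * x + e * e)) + (e + e) := by ring
          _ ≤ x * x + (e + (e + e)) + (e + e) := by
              gcongr
              · exact mul_le_of_le_one_left (zero_le ..) hx1
              · exact mul_le_of_le_one_right (zero_le ..) hx1
              · exact mul_le_of_le_one_left (zero_le ..) he1
          _ = x * x + 5 * e := by ring
      · calc x * x ≤ (b + e) * (b + e) := mul_le_mul' hxb hxb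
          _ = b * b + (b * e + (e * b + e * e)) := by ring
          _ ≤ b * b + (e + (e + e)) := by
              gcongr
              · exact mul_le_of_le_one_left (zero_le ..) hb1
              · exact mul_le_of_le_one_right (zero_le ..) hb1
              · exact mul_le_of_le_one_left (zero_le ..) he1
          _ = ν (cylinder s S ∩ T ⁻¹' cylinder s S) + 3 * e := by rw [hmul, hCB]; ring
          _ ≤ (x + ν ((cylinder s S ∩ T ⁻¹' cylinder s S) ∆ A)) + 3 * e := by
              gcongr; exact tri _ _
          _ = (x + ν (A ∆ (cylinder s S ∩ T ⁻¹' cylinder s S))) + 3 * e := by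
              rw [symmDiff_comm]
          _ ≤ (x + (e + e)) + 3 * e := by gcongr
          _ = x + 5 * e := by ring
  have h5 : ∀ ε : ℝ≥0, 0 < ε → 5 * ENNReal.ofReal ((ε : ℝ) / 5) = (ε : ℝ≥0∞) := by
    intro ε hε
    have h05 : (0 : ℝ) ≤ 5 := by norm_num
    rw [show ((5 : ℝ≥0∞)) = ENNReal.ofReal 5 by simp,
      ← ENNReal.ofReal_mul h05, mul_div_cancel₀ _ (by norm_num : (5:ℝ) ≠ 0),
      ENNReal.ofReal_coe_nnreal]
  have h1 : x ≤ x * x := by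
    refine ENNReal.le_of_forall_pos_le_add fun ε hε _ => ?_
    have hr : (0 : ℝ) < (ε : ℝ) / 5 := by positivity
    have := (key _ hr).1
    rwa [h5 ε hε] at this
  have h2 : x * x ≤ x := by
    refine ENNReal.le_of_forall_pos_le_add fun ε hε _ => ?_
    have hr : (0 : ℝ) < (ε : ℝ) / 5 := by positivity
    have := (key _ hr).2
    rwa [h5 ε hε] at this
  have hxx : x = x * x := le_antisymm h1 h2
  rcases eq_or_ne x 0 with h0 | h0
  · exact Or.inl h0
  · right
    have hfin : x ≠ ∞ := measure_ne_top ν A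
    have hx1 : x * 1 = x * x := by rw [mul_one]; exact hxx
    exact ((ENNReal.mul_right_inj h0 hfin).1 hx1).symm
end

section
/- The group of invertible elements of the double coset semigroup Γ_m = ℍ\Aut(F_∞)/ℍ (with the ∘-multiplication defined via the shift elements θ_j) is isomorphic to Aut(F_m). In particular, for g ∈ Aut(F_∞) the double coset ℍgℍ is invertible in Γ_m if and only if g ∈ Aut(F_m)·ℍ·Aut(F_m), and distinct elements of Aut(F_m) lie in distinct double cosets. -/
namespace Stmt19

/-- `F_∞`, the free group on generators `x₁,…,x_m, y₁, y₂, …`. -/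
abbrev F (m : ℕ) := FreeGroup (Fin m ⊕ ℕ)

def X {m : ℕ} (i : Fin m) : F m := FreeGroup.of (Sum.inl i)
def Y {m : ℕ} (n : ℕ) : F m := FreeGroup.of (Sum.inr n)

/-- Membership in `𝔾 = Aut(F_∞)`: the automorphism moves only finitely many
generators. -/
def Finitary {m : ℕ} (g : MulAut (F m)) : Prop :=
  {v : Fin m ⊕ ℕ | g (FreeGroup.of v) ≠ FreeGroup.of v}.Finite

/-- Membership in `ℍ ⊂ 𝔾`, the stabilizer of `x₁, …, x_m`. -/
def InH {m : ℕ} (h : MulAut (F m)) : Prop :=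
  Finitary h ∧ ∀ i, h (X i) = X i

/-- The double coset relation defining `Γ_m = ℍ\𝔾/ℍ`. -/
def rel {m : ℕ} (g g' : MulAut (F m)) : Prop :=
  ∃ h₁ h₂ : MulAut (F m), InH h₁ ∧ InH h₂ ∧ g' = h₁ * g * h₂

/-- The set of double cosets `Γ_m = ℍ\𝔾/ℍ`. -/
def Γ (m : ℕ) : Type _ := Quot (rel (m := m))

/-! ### Auxiliary lemmas -/

section Aux

variable {m : ℕ}

lemma aut_ext {α : Type*} {f g : MulAut (FreeGroup α)}
    (h : ∀ v, f (FreeGroup.of v) = g (FreeGroup.of v)) : f = g :=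
  MulEquiv.toMonoidHom_injective (FreeGroup.ext_hom _ _ h)

lemma fin_one : Finitary (1 : MulAut (F m)) := by
  simp [Finitary]

lemma fin_mul {f g : MulAut (F m)} (hf : Finitary f) (hg : Finitary g) :
    Finitary (f * g) := by
  refine (hf.union hg).subset ?_
  intro v hv
  by_contra hc
  simp only [Set.mem_union, Set.mem_setOf_eq, not_or, not_not] at hc
  exact hv (by simp only [Set.mem_setOf_eq, MulAut.mul_apply, hc.2, hc.1, not_not])

lemma fin_inv {f : MulAut (F m)} (hf : Finitary f) : Finitary f⁻¹ := by
  refine hf.subset ?_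
  intro v hv
  simp only [Set.mem_setOf_eq] at hv ⊢
  intro h
  refine hv ?_
  rw [MulAut.inv_def]
  exact (MulEquiv.symm_apply_eq f).2 h.symm

lemma inH_one : InH (1 : MulAut (F m)) := ⟨fin_one, fun _ => rfl⟩

lemma inH_mul {f g : MulAut (F m)} (hf : InH f) (hg : InH g) : InH (f * g) :=
  ⟨fin_mul hf.1 hg.1, fun i => by rw [MulAut.mul_apply, hg.2 i, hf.2 i]⟩

lemma inH_inv {f : MulAut (F m)} (hf : InH f) : InH f⁻¹ :=
  ⟨fin_inv hf.1, fun i => by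
    rw [MulAut.inv_def]
    exact (MulEquiv.symm_apply_eq f).2 (hf.2 i).symm⟩

lemma rel_equivalence : Equivalence (rel (m := m)) := by
  constructor
  · intro g
    exact ⟨1, 1, inH_one, inH_one, by group⟩
  · rintro g g' ⟨h₁, h₂, H1, H2, e⟩
    exact ⟨h₁⁻¹, h₂⁻¹, inH_inv H1, inH_inv H2, by rw [e]; group⟩
  · rintro g g' g'' ⟨h₁, h₂, H1, H2, e⟩ ⟨k₁, k₂, K1, K2, e'⟩
    exact ⟨k₁ * h₁, h₂ * k₂, inH_mul K1 H1, inH_mul H2 K2, by rw [e', e]; group⟩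

lemma quot_exact {g g' : MulAut (F m)}
    (h : Quot.mk rel g = Quot.mk rel g') : rel g g' :=
  (rel_equivalence.eqvGen_iff).1 (Quot.eqvGen_exact h)

lemma fix_map_inl {f : MulAut (F m)} (hf : ∀ i, f (X i) = X i)
    (u : FreeGroup (Fin m)) :
    f (FreeGroup.map Sum.inl u) = FreeGroup.map Sum.inl u := by
  have h : (f.toMonoidHom).comp (FreeGroup.map Sum.inl) = FreeGroup.map Sum.inl :=
    FreeGroup.ext_hom _ _ (fun i => by
      simp only [MonoidHom.comp_apply, FreeGroup.map.of, MulEquiv.coe_toMonoidHom]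
      exact hf i)
  exact DFunLike.congr_fun h u

/-- The retraction `F_∞ → F_m` killing all the `y`-generators. -/
def σ (m : ℕ) : F m →* FreeGroup (Fin m) :=
  FreeGroup.lift (Sum.elim FreeGroup.of fun _ => 1)

lemma σ_X (i : Fin m) : σ m (X i) = FreeGroup.of i := by
  simp [σ, X]

lemma σ_Y (n : ℕ) : σ m (Y n) = 1 := by
  simp [σ, Y]

lemma σ_inl (u : FreeGroup (Fin m)) : σ m (FreeGroup.map Sum.inl u) = u := by
  have h : (σ m).comp (FreeGroup.map Sum.inl) = MonoidHom.id _ :=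
    FreeGroup.ext_hom _ _ (fun i => by simp [σ, FreeGroup.map.of])
  exact DFunLike.congr_fun h u

lemma inl_injective {u u' : FreeGroup (Fin m)}
    (h : FreeGroup.map (Sum.inl : Fin m → Fin m ⊕ ℕ) u = FreeGroup.map Sum.inl u') :
    u = u' := by
  have := congrArg (σ m) h
  rwa [σ_inl, σ_inl] at this

/-- Every element of `F_∞` only depends on finitely many `y`-generators. -/
lemma lemA (w : F m) : ∃ K : ℕ, ∀ f f' : F m →* F m,
    (∀ i, f (X i) = f' (X i)) → (∀ n < K, f (Y n) = f' (Y n)) → f w = f' w := by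
  induction w using FreeGroup.induction_on with
  | C1 => exact ⟨0, fun f f' _ _ => by simp⟩
  | of v =>
    cases v with
    | inl i => exact ⟨0, fun f f' hX _ => hX i⟩
    | inr n => exact ⟨n + 1, fun f f' _ hY => hY n (Nat.lt_succ_self n)⟩
  | inv_of v ih =>
    obtain ⟨K, hK⟩ := ih
    exact ⟨K, fun f f' hX hY => by rw [map_inv, map_inv, hK f f' hX hY]⟩
  | mul x y ihx ihy =>
    obtain ⟨K1, h1⟩ := ihx
    obtain ⟨K2, h2⟩ := ihy
    refine ⟨max K1 K2, fun f f' hX hY => ?_⟩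
    rw [map_mul, map_mul, h1 f f' hX (fun n hn => hY n (lt_of_lt_of_le hn (le_max_left _ _))),
      h2 f f' hX (fun n hn => hY n (lt_of_lt_of_le hn (le_max_right _ _)))]

section Theta

variable (θ : ℕ → MulAut (F m))
variable (hθx : ∀ j i, θ j (X i) = X i)
variable (hθy : ∀ j n, θ j (Y n) =
  Y (if n < j then n + j else if n < 2 * j then n - j else n))

include hθx hθy

lemma theta_invol (j : ℕ) (z : F m) : θ j (θ j z) = z := by
  have h : θ j * θ j = 1 := by
    apply aut_ext
    rintro (i | n)
    · show (θ j * θ j) (X i) = (1 : MulAut (F m)) (X i)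
      rw [MulAut.mul_apply, hθx, hθx, MulAut.one_apply]
    · show (θ j * θ j) (Y n) = (1 : MulAut (F m)) (Y n)
      rw [MulAut.mul_apply, hθy, hθy, MulAut.one_apply]
      exact congrArg Y (by split_ifs <;> omega)
  have h2 := congrArg (fun f : MulAut (F m) => f z) h
  simpa only [MulAut.mul_apply, MulAut.one_apply] using h2

lemma theta_inH (j : ℕ) : InH (θ j) := by
  constructor
  · refine Set.Finite.subset (Set.Finite.image Sum.inr (Set.finite_Iio (2 * j))) ?_
    rintro (i | n) hv
    · exact absurd (hθx j i) hv
    · rcases lt_or_ge n (2 * j) with h | h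
      · exact ⟨n, h, rfl⟩
      · refine absurd ?_ hv
        show θ j (Y n) = Y n
        rw [hθy]
        exact congrArg Y (by split_ifs <;> omega)
  · exact hθx j

/-- If `θ j w` is eventually constant in `j`, then `w` is a word in the
`x`-generators only, and the constant value is `w` itself. -/
lemma lemB {w t : F m} {N : ℕ} (h : ∀ j ≥ N, θ j w = t) :
    (∃ u, w = FreeGroup.map Sum.inl u) ∧ t = w := by
  obtain ⟨K, hK⟩ := lemA w
  set j1 := max N K with hj1
  set j2 := 2 * j1 with hj2
  have hK1 : K ≤ j1 := le_max_right _ _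
  have hN1 : j1 ≥ N := le_max_left _ _
  have hN2 : j2 ≥ N := le_trans hN1 (by omega)
  have hw : θ j1 w = θ j2 w := (h j1 hN1).trans (h j2 hN2).symm
  have hw2 : w = θ j1 (θ j2 w) := by
    rw [← hw, theta_invol θ hθx hθy]
  set k : F m →* F m := FreeGroup.lift
    (fun v => Sum.elim (fun i => X i) (fun n => if n < j2 then Y n else 1) v) with hk
  have hkX : ∀ i, k (X i) = X i := fun i => by simp [hk, X]
  have hρX : ∀ i : Fin m, FreeGroup.map Sum.inl (σ m (X i)) = X i := fun i => by
    rw [σ_X]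
    exact FreeGroup.map.of
  have e1 : k w = w := by
    have := hK k (MonoidHom.id _) (fun i => hkX i)
      (fun n hn => by
        simp only [hk, Y, FreeGroup.lift_apply_of, Sum.elim_inr, MonoidHom.id_apply]
        rw [if_pos (by omega)])
    simpa using this
  have e2 : k (θ j1 (θ j2 w)) = ((FreeGroup.map Sum.inl).comp (σ m)) w := by
    have := hK (k.comp ((θ j1).toMonoidHom.comp (θ j2).toMonoidHom))
      ((FreeGroup.map Sum.inl).comp (σ m))
      (fun i => by
        simp only [MonoidHom.comp_apply, MulEquiv.coe_toMonoidHom]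
        rw [hθx, hθx, hkX, hρX])
      (fun n hn => by
        simp only [MonoidHom.comp_apply, MulEquiv.coe_toMonoidHom, σ_Y, map_one]
        rw [hθy, if_pos (by omega)]
        rw [hθy, if_neg (by omega), if_neg (by omega)]
        simp only [hk, Y, FreeGroup.lift_apply_of, Sum.elim_inr]
        rw [if_neg (by omega)])
    simpa using this
  have key : w = FreeGroup.map Sum.inl (σ m w) := by
    calc w = k w := e1.symm
    _ = k (θ j1 (θ j2 w)) := by rw [← hw2]
    _ = ((FreeGroup.map Sum.inl).comp (σ m)) w := e2
    _ = FreeGroup.map Sum.inl (σ m w) := rfl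
  refine ⟨⟨σ m w, key⟩, ?_⟩
  rw [← h j1 hN1]
  calc θ j1 w = θ j1 (FreeGroup.map Sum.inl (σ m w)) := by rw [← key]
  _ = FreeGroup.map Sum.inl (σ m w) := fix_map_inl (hθx j1) _
  _ = w := key.symm

end Theta

end Aux

/-- Let `E : Aut(F_m) → 𝔾` be the canonical embedding (acting on the `x`-generators
and fixing all `y`-generators), let `θ_j ∈ ℍ` swap `y₁,…,y_j` with `y_{j+1},…,y_{2j}`,
and let `mul` be the `∘`-multiplication on `Γ_m`, i.e. `ℍgℍ ∘ ℍhℍ = ℍ g θ_j h ℍ` for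
all large `j`.  Then `a ↦ ℍ E(a) ℍ` is an injective multiplicative map from
`Aut(F_m)` to `Γ_m` whose image is exactly the set of invertible elements of `Γ_m`;
in particular the group of invertible elements of `Γ_m` is isomorphic to `Aut(F_m)`,
a double coset `ℍgℍ` is invertible iff `g ∈ Aut(F_m)·ℍ·Aut(F_m)`, and distinct
elements of `Aut(F_m)` lie in distinct double cosets. -/
theorem stmt_19 (m : ℕ)
    (E : MulAut (FreeGroup (Fin m)) → MulAut (F m))
    (hEx : ∀ a i, E a (X i) = FreeGroup.map Sum.inl (a (FreeGroup.of i)))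
    (hEy : ∀ a n, E a (Y n) = Y n)
    (θ : ℕ → MulAut (F m))
    (hθx : ∀ j i, θ j (X i) = X i)
    (hθy : ∀ j n, θ j (Y n) =
      Y (if n < j then n + j else if n < 2 * j then n - j else n))
    (mul : Γ m → Γ m → Γ m)
    (hmul : ∀ g h : MulAut (F m), Finitary g → Finitary h → ∃ N, ∀ j ≥ N,
      mul (Quot.mk rel g) (Quot.mk rel h) = Quot.mk rel (g * θ j * h)) :
    (∀ a b : MulAut (FreeGroup (Fin m)),
      mul (Quot.mk rel (E a)) (Quot.mk rel (E b)) = Quot.mk rel (E (a * b))) ∧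
    (∀ a b : MulAut (FreeGroup (Fin m)),
      Quot.mk rel (E a) = Quot.mk rel (E b) → a = b) ∧
    (∀ g : MulAut (F m), Finitary g →
      ((∃ g' : MulAut (F m), Finitary g' ∧
          mul (Quot.mk rel g) (Quot.mk rel g') = Quot.mk rel 1 ∧
          mul (Quot.mk rel g') (Quot.mk rel g) = Quot.mk rel 1) ↔
        ∃ a b : MulAut (FreeGroup (Fin m)), ∃ h : MulAut (F m),
          InH h ∧ g = E a * h * E b)) := by
  -- `E a` on a word in the `x`-generators
  have EX : ∀ a (u : FreeGroup (Fin m)),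
      E a (FreeGroup.map Sum.inl u) = FreeGroup.map Sum.inl (a u) := by
    intro a u
    have h : (E a).toMonoidHom.comp (FreeGroup.map Sum.inl) =
        (FreeGroup.map Sum.inl).comp a.toMonoidHom :=
      FreeGroup.ext_hom _ _ (fun i => by
        simp only [MonoidHom.comp_apply, FreeGroup.map.of, MulEquiv.coe_toMonoidHom]
        exact hEx a i)
    exact DFunLike.congr_fun h u
  -- `E` is multiplicative
  have Emul : ∀ a b, E (a * b) = E a * E b := by
    intro a b
    apply aut_ext
    rintro (i | n)
    · show E (a * b) (X i) = (E a * E b) (X i)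
      rw [MulAut.mul_apply, hEx (a * b) i, hEx b i, EX a, MulAut.mul_apply]
    · show E (a * b) (Y n) = (E a * E b) (Y n)
      rw [MulAut.mul_apply, hEy, hEy, hEy]
  have Eone : E 1 = 1 := by
    apply aut_ext
    rintro (i | n)
    · show E 1 (X i) = (1 : MulAut (F m)) (X i)
      rw [hEx, MulAut.one_apply, MulAut.one_apply]
      exact FreeGroup.map.of
    · show E 1 (Y n) = (1 : MulAut (F m)) (Y n)
      rw [hEy, MulAut.one_apply]
  have Einv : ∀ a, (E a)⁻¹ = E a⁻¹ := by
    intro a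
    refine inv_eq_of_mul_eq_one_right ?_
    rw [← Emul, mul_inv_cancel, Eone]
  -- `E a` is finitary
  have finE : ∀ a, Finitary (E a) := by
    intro a
    refine Set.Finite.subset (Set.finite_range (Sum.inl : Fin m → Fin m ⊕ ℕ)) ?_
    rintro (i | n) hv
    · exact ⟨i, rfl⟩
    · exact absurd (hEy a n) hv
  -- `E c` commutes with each `θ j`
  have comm : ∀ c j, E c * θ j = θ j * E c := by
    intro c j
    apply aut_ext
    rintro (i | n)
    · show (E c * θ j) (X i) = (θ j * E c) (X i)
      rw [MulAut.mul_apply, MulAut.mul_apply, hθx, hEx]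
      exact (fix_map_inl (hθx j) _).symm
    · show (E c * θ j) (Y n) = (θ j * E c) (Y n)
      rw [MulAut.mul_apply, MulAut.mul_apply, hEy, hθy, hEy]
  -- conjugation by `E a` preserves `ℍ`
  have conjE : ∀ (a : MulAut (FreeGroup (Fin m))) (k : MulAut (F m)),
      InH k → InH (E a * k * (E a)⁻¹) := by
    intro a k hk
    constructor
    · exact fin_mul (fin_mul (finE a) hk.1) (fin_inv (finE a))
    · intro i
      rw [MulAut.mul_apply, MulAut.mul_apply, Einv a, hEx, fix_map_inl hk.2, EX,
        MulAut.apply_inv_self]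
      exact FreeGroup.map.of
  refine ⟨?_, ?_, ?_⟩
  · -- multiplicativity
    intro a b
    obtain ⟨N, hN⟩ := hmul (E a) (E b) (finE a) (finE b)
    rw [hN N le_rfl]
    refine (Quot.sound ?_).symm
    refine ⟨1, θ N, inH_one, theta_inH θ hθx hθy N, ?_⟩
    rw [one_mul, Emul, mul_assoc, mul_assoc, comm b N]
  · -- injectivity
    intro a b hab
    obtain ⟨h₁, h₂, H1, H2, e⟩ := quot_exact hab
    have key : ∀ i : Fin m, b (FreeGroup.of i) = a (FreeGroup.of i) := by
      intro i
      have h := congrArg (fun f : MulAut (F m) => f (X i)) e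
      simp only [MulAut.mul_apply] at h
      rw [H2.2 i, hEx a i, fix_map_inl H1.2, hEx b i] at h
      exact inl_injective h
    apply aut_ext
    exact fun v => (key v).symm
  · -- invertibility criterion
    intro g hg
    constructor
    · -- invertible → g ∈ Aut(F_m) ⬝ ℍ ⬝ Aut(F_m)
      rintro ⟨g', hg', hinv1, hinv2⟩
      obtain ⟨N1, hN1⟩ := hmul g g' hg hg'
      obtain ⟨N2, hN2⟩ := hmul g' g hg' hg
      have mem1 : ∀ j ≥ N1, InH (g * θ j * g') := by
        intro j hj
        have he : Quot.mk rel (g * θ j * g') = Quot.mk rel (1 : MulAut (F m)) := by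
          rw [← hN1 j hj, hinv1]
        obtain ⟨h₁, h₂, H1, H2, e⟩ := quot_exact he
        have : g * θ j * g' = h₁⁻¹ * h₂⁻¹ := by
          calc g * θ j * g' = h₁⁻¹ * (h₁ * (g * θ j * g') * h₂) * h₂⁻¹ := by group
          _ = h₁⁻¹ * 1 * h₂⁻¹ := by rw [← e]
          _ = h₁⁻¹ * h₂⁻¹ := by group
        rw [this]
        exact inH_mul (inH_inv H1) (inH_inv H2)
      have mem2 : ∀ j ≥ N2, InH (g' * θ j * g) := by
        intro j hj
        have he : Quot.mk rel (g' * θ j * g) = Quot.mk rel (1 : MulAut (F m)) := by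
          rw [← hN2 j hj, hinv2]
        obtain ⟨h₁, h₂, H1, H2, e⟩ := quot_exact he
        have : g' * θ j * g = h₁⁻¹ * h₂⁻¹ := by
          calc g' * θ j * g = h₁⁻¹ * (h₁ * (g' * θ j * g) * h₂) * h₂⁻¹ := by group
          _ = h₁⁻¹ * 1 * h₂⁻¹ := by rw [← e]
          _ = h₁⁻¹ * h₂⁻¹ := by group
        rw [this]
        exact inH_mul (inH_inv H1) (inH_inv H2)
      -- `g (X i)` is a word in the `x`-generators
      have hgX : ∀ i : Fin m, ∃ u, g (X i) = FreeGroup.map Sum.inl u := by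
        intro i
        refine (lemB θ hθx hθy (w := g (X i)) (t := g'⁻¹ (X i)) (N := N2) ?_).1
        intro j hj
        have h := (mem2 j hj).2 i
        simp only [MulAut.mul_apply] at h
        rw [MulAut.inv_def, MulEquiv.eq_symm_apply]
        exact h
      -- `g⁻¹ (X i)` is a word in the `x`-generators
      have hgX' : ∀ i : Fin m, ∃ u, g⁻¹ (X i) = FreeGroup.map Sum.inl u := by
        intro i
        obtain ⟨h1, h2⟩ := lemB θ hθx hθy (w := g' (X i)) (t := g⁻¹ (X i)) (N := N1)
          (by
            intro j hj
            have h := (mem1 j hj).2 i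
            simp only [MulAut.mul_apply] at h
            rw [MulAut.inv_def, MulEquiv.eq_symm_apply]
            exact h)
        rw [h2]
        exact h1
      -- build the automorphism of `F_m`
      set c : FreeGroup (Fin m) →* FreeGroup (Fin m) :=
        (σ m).comp (g.toMonoidHom.comp (FreeGroup.map Sum.inl)) with hc
      set d : FreeGroup (Fin m) →* FreeGroup (Fin m) :=
        (σ m).comp ((g⁻¹).toMonoidHom.comp (FreeGroup.map Sum.inl)) with hd
      have hcg : ∀ z, FreeGroup.map Sum.inl (c z) = g (FreeGroup.map Sum.inl z) := by
        intro z
        have h : (FreeGroup.map Sum.inl).comp c =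
            g.toMonoidHom.comp (FreeGroup.map Sum.inl) :=
          FreeGroup.ext_hom _ _ (fun i => by
            obtain ⟨u, hu⟩ := hgX i
            simp only [hc, MonoidHom.comp_apply, FreeGroup.map.of,
              MulEquiv.coe_toMonoidHom]
            show FreeGroup.map Sum.inl (σ m (g (X i))) = g (X i)
            rw [hu, σ_inl])
        exact DFunLike.congr_fun h z
      have hdg : ∀ z, FreeGroup.map Sum.inl (d z) = g⁻¹ (FreeGroup.map Sum.inl z) := by
        intro z
        have h : (FreeGroup.map Sum.inl).comp d =
            (g⁻¹).toMonoidHom.comp (FreeGroup.map Sum.inl) :=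
          FreeGroup.ext_hom _ _ (fun i => by
            obtain ⟨u, hu⟩ := hgX' i
            simp only [hd, MonoidHom.comp_apply, FreeGroup.map.of,
              MulEquiv.coe_toMonoidHom]
            show FreeGroup.map Sum.inl (σ m (g⁻¹ (X i))) = g⁻¹ (X i)
            rw [hu, σ_inl])
        exact DFunLike.congr_fun h z
      have hdc : d.comp c = MonoidHom.id _ := by
        refine FreeGroup.ext_hom _ _ (fun i => ?_)
        refine inl_injective ?_
        rw [MonoidHom.comp_apply, hdg, hcg, MonoidHom.id_apply]
        show g⁻¹ (g (FreeGroup.map Sum.inl (FreeGroup.of i))) = _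
        rw [MulAut.inv_apply_self]
      have hcd : c.comp d = MonoidHom.id _ := by
        refine FreeGroup.ext_hom _ _ (fun i => ?_)
        refine inl_injective ?_
        rw [MonoidHom.comp_apply, hcg, hdg, MonoidHom.id_apply]
        show g (g⁻¹ (FreeGroup.map Sum.inl (FreeGroup.of i))) = _
        rw [MulAut.apply_inv_self]
      set a : MulAut (FreeGroup (Fin m)) := MonoidHom.toMulEquiv c d hdc hcd with ha
      have haX : ∀ i : Fin m, E a (X i) = g (X i) := by
        intro i
        rw [hEx]
        show FreeGroup.map Sum.inl (c (FreeGroup.of i)) = g (X i)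
        rw [hcg]
        rfl
      refine ⟨a, 1, (E a)⁻¹ * g, ⟨fin_mul (fin_inv (finE a)) hg, ?_⟩, ?_⟩
      · intro i
        rw [MulAut.mul_apply, ← haX i, MulAut.inv_apply_self]
      · rw [Eone, mul_one]
        group
    · -- g ∈ Aut(F_m) ⬝ ℍ ⬝ Aut(F_m) → invertible
      rintro ⟨a, b, h, hH, rfl⟩
      refine ⟨(E a * h * E b)⁻¹, fin_inv hg, ?_, ?_⟩
      · obtain ⟨N, hN⟩ := hmul (E a * h * E b) (E a * h * E b)⁻¹ hg (fin_inv hg)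
        rw [hN N le_rfl]
        have inner : E b * θ N * (E b)⁻¹ = θ N := by
          rw [comm b N]; group
        have step : E a * h * E b * θ N * (E a * h * E b)⁻¹ =
            E a * (h * θ N * h⁻¹) * (E a)⁻¹ := by
          calc E a * h * E b * θ N * (E a * h * E b)⁻¹
              = E a * (h * (E b * θ N * (E b)⁻¹) * h⁻¹) * (E a)⁻¹ := by group
          _ = E a * (h * θ N * h⁻¹) * (E a)⁻¹ := by rw [inner]
        have hK : InH (E a * h * E b * θ N * (E a * h * E b)⁻¹) := by
          rw [step]
          exact conjE a _ (inH_mul (inH_mul hH (theta_inH θ hθx hθy N)) (inH_inv hH))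
        refine Quot.sound ?_
        exact ⟨(E a * h * E b * θ N * (E a * h * E b)⁻¹)⁻¹, 1, inH_inv hK, inH_one,
          by group⟩
      · obtain ⟨N, hN⟩ := hmul (E a * h * E b)⁻¹ (E a * h * E b) (fin_inv hg) hg
        rw [hN N le_rfl]
        have inner : (E a)⁻¹ * θ N * E a = θ N := by
          rw [mul_assoc, ← comm a N]; group
        have hEb : (E b⁻¹)⁻¹ = E b := (Einv b⁻¹).trans (congrArg E (inv_inv b))
        have step : (E a * h * E b)⁻¹ * θ N * (E a * h * E b) =
            E b⁻¹ * (h⁻¹ * θ N * h) * (E b⁻¹)⁻¹ := by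
          calc (E a * h * E b)⁻¹ * θ N * (E a * h * E b)
              = (E b)⁻¹ * (h⁻¹ * ((E a)⁻¹ * θ N * E a) * h) * E b := by group
          _ = (E b)⁻¹ * (h⁻¹ * θ N * h) * E b := by rw [inner]
          _ = E b⁻¹ * (h⁻¹ * θ N * h) * (E b⁻¹)⁻¹ := by rw [hEb, Einv b]
        have hK : InH ((E a * h * E b)⁻¹ * θ N * (E a * h * E b)) := by
          rw [step]
          exact conjE b⁻¹ _ (inH_mul (inH_mul (inH_inv hH) (theta_inH θ hθx hθy N)) hH)
        refine Quot.sound ?_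
        exact ⟨((E a * h * E b)⁻¹ * θ N * (E a * h * E b))⁻¹, 1, inH_inv hK, inH_one,
          by group⟩

end Stmt19
end
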